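/- Fix an instance on speed-ordered unrelated machines (s_{1j} ≥ … ≥ s_{mj} for every j) with unit weights, the schedule produced by Algorithm Round Robin for speed-ordered machines, and any constant κ ≥ 1. Then the dual assignment ā_j = ∑_{t'=0}^{C_j} 1[q_{jt'}/p_j ≤ ζ_{t'}], b̄_{it} = (1/κ)∑_{t'≥t} β_{it'}·ζ_{t'}, c̄_{jt} = (1/κ)∑_{t'≥t} γ_{jt'}·ζ_{t'} is nonnegative and satisfies, for every machine i, job j, and time t ≥ r_j: (ā_j s_{ij})/p_j − κ·b̄_{it} − κ·c̄_{jt} ≤ (s_{ij}·t)/p_j. -/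

import Mathlib

/-! Fix a time `t' ≥ t` at which `j` is alive and counted in `ā_j`, i.e. `q_{jt'}/p_j ≤ ζ_{t'}`,
and let `k = |J(t')|`. By speed ordering each of the first `min(k, i+1)` machines is at least as
fast for `j` as machine `i`, so `k·q_{jt'} ≥ min(k, i+1)·s_{ij}`, which gives
`s_{ij}/p_j ≤ (β_{it'} + γ_{jt'})·ζ_{t'}`. The counted times before `t` contribute at most
`t·s_{ij}/p_j`; the others are dominated by the tails `κ b̄_{it} + κ c̄_{jt}`, which are finite
sums because no job is alive after `max_j C_j`. -/

open Finset

/-- The progress of job `j` at time `t`: `q_{jt} = ∑_i s_{ij} y_{ijt}`. -/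
def progress {m n : ℕ} (s : Fin m → Fin n → ℝ) (y : Fin m → Fin n → ℕ → ℝ)
    (j : Fin n) (t : ℕ) : ℝ := ∑ i, s i j * y i j t

/-- `C j` is the least time `t` such that `∑_{t'=r_j}^{t} q_{jt'} ≥ p_j`. -/
def CompletesAt {m n : ℕ} (p : Fin n → ℝ) (r : Fin n → ℕ) (s : Fin m → Fin n → ℝ)
    (y : Fin m → Fin n → ℕ → ℝ) (C : Fin n → ℕ) : Prop :=
  ∀ j, (p j ≤ ∑ t' ∈ Finset.Icc (r j) (C j), progress s y j t') ∧
    (∀ t, t < C j → ¬ (p j ≤ ∑ t' ∈ Finset.Icc (r j) t, progress s y j t'))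

lemma Multiset.getD_sort_nonneg {M : Multiset ℝ} (hM : ∀ x ∈ M, 0 ≤ x) (k : ℕ) :
    0 ≤ (M.sort (· ≤ ·)).getD k 0 := by
  rw [List.getD_eq_getElem?_getD]
  cases h : (M.sort (· ≤ ·))[k]? with
  | none => rfl
  | some x => exact hM x ((Multiset.mem_sort _).1 (List.mem_of_getElem? h))

lemma Fin.min_mul_le_sum_val_lt_of_antitone {m : ℕ} {f : Fin m → ℝ} (hf : Antitone f)
    (hf0 : ∀ i, 0 ≤ f i) (i : Fin m) (k : ℕ) :
    (min k (i.val + 1) : ℕ) * f i ≤ ∑ i' : Fin m with i'.val < k, f i' := by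
  set c := min k (i.val + 1)
  have hcard : #{i' : Fin m | i'.val < c} = c := by
    rw [Fin.card_filter_val_lt]
    exact min_eq_right (by omega)
  calc (c : ℝ) * f i = #{i' : Fin m | i'.val < c} • f i := by rw [hcard, nsmul_eq_mul]
    _ ≤ ∑ i' : Fin m with i'.val < c, f i' :=
        card_nsmul_le_sum _ _ _ fun i' hi' => hf (Fin.le_def.mpr (by simp [c] at hi'; omega))
    _ ≤ ∑ i' : Fin m with i'.val < k, f i' :=
        sum_le_sum_of_subset_of_nonneg (fun i' => by simp [c]; omega) fun i' _ _ => hf0 i'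

lemma le_add_one_mul_of_min_mul_le {c q : ℝ} {k i : ℕ} (hk : 0 < k) (hc : 0 ≤ c)
    (h : (min k (i + 1) : ℕ) * c ≤ k * q) :
    c ≤ ((if i + 1 ≤ k then (k : ℝ) / (i + 1) else 0) + 1) * q := by
  have hk' : (0 : ℝ) < k := by exact_mod_cast hk
  split_ifs with hik
  · rw [min_eq_right hik] at h
    push_cast at h
    have hq : 0 ≤ q := nonneg_of_mul_nonneg_right (le_trans (by positivity) h) hk'
    have : c ≤ k / (i + 1) * q := by
      rw [div_mul_eq_mul_div, le_div_iff₀ (by positivity)]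
      linarith
    linarith
  · rw [min_eq_left (by omega)] at h
    linarith [le_of_mul_le_mul_left h hk']

lemma sum_range_succ_le_mul_add_sum_Icc {f g : ℕ → ℝ} {c : ℝ} (hc : 0 ≤ c) {t N : ℕ}
    (hlow : ∀ t' < t, f t' ≤ c) (hhigh : ∀ t' ∈ Icc t N, f t' ≤ g t') :
    ∑ t' ∈ range (N + 1), f t' ≤ t * c + ∑ t' ∈ Icc t N, g t' := by
  rw [← sum_filter_add_sum_filter_not (range (N + 1)) (· < t)]
  have hhead : #{t' ∈ range (N + 1) | t' < t} ≤ t :=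
    (card_le_card fun t' ht' => by simp at ht' ⊢; omega).trans (card_range t).le
  have htail : {t' ∈ range (N + 1) | ¬t' < t} = Icc t N := by
    ext t'
    simp only [mem_filter, mem_range, mem_Icc]
    omega
  rw [htail]
  gcongr ?_ + ?_
  · calc ∑ t' ∈ range (N + 1) with t' < t, f t'
        ≤ #{t' ∈ range (N + 1) | t' < t} • c :=
          sum_le_card_nsmul _ _ _ fun t' ht' => hlow t' (mem_filter.1 ht').2
      _ ≤ t * c := by rw [nsmul_eq_mul]; gcongr
  · exact sum_le_sum hhigh

noncomputable def tailSum (g : ℕ → ℝ) (t : ℕ) : ℝ := ∑' t', if t ≤ t' then g t' else 0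

lemma tailSum_nonneg {g : ℕ → ℝ} (hg : ∀ t, 0 ≤ g t) (t : ℕ) : 0 ≤ tailSum g t :=
  tsum_nonneg fun t' => by split_ifs <;> simp [hg]

lemma sum_Icc_le_tailSum {g : ℕ → ℝ} {N : ℕ} (hg : ∀ t, 0 ≤ g t) (hN : ∀ t, N < t → g t = 0)
    (t M : ℕ) : ∑ t' ∈ Icc t M, g t' ≤ tailSum g t := by
  have hsum : Summable fun t' => if t ≤ t' then g t' else 0 :=
    summable_of_ne_finset_zero (s := range (N + 1)) fun t' ht' => by
      simp [hN t' (by simpa using ht')]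
  calc ∑ t' ∈ Icc t M, g t' = ∑ t' ∈ Icc t M, if t ≤ t' then g t' else 0 :=
        sum_congr rfl fun t' ht' => (if_pos (mem_Icc.1 ht').1).symm
    _ ≤ tailSum g t := hsum.sum_le_tsum _ fun t' _ => by split_ifs <;> simp [hg]

section RoundRobin

variable {m n : ℕ} {s : Fin m → Fin n → ℝ} {y : Fin m → Fin n → ℕ → ℝ} {A : ℕ → Finset (Fin n)}
  {j : Fin n} {t : ℕ}

lemma progress_nonneg (hs : ∀ i, 0 ≤ s i j) (hy : ∀ i, 0 ≤ y i j t) : 0 ≤ progress s y j t :=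
  sum_nonneg fun i _ => mul_nonneg (hs i) (hy i)

lemma getD_sort_progress_div_nonneg (hs : ∀ i j, 0 ≤ s i j) (hy : ∀ i j, 0 ≤ y i j t)
    {p : Fin n → ℝ} (hp : ∀ j, 0 < p j) (U : Finset (Fin n)) (k : ℕ) :
    0 ≤ (Multiset.sort (U.val.map fun j => progress s y j t / p j) (· ≤ ·)).getD k 0 := by
  refine Multiset.getD_sort_nonneg (fun x hx => ?_) k
  obtain ⟨j, -, rfl⟩ := Multiset.mem_map.1 hx
  exact div_nonneg (progress_nonneg (hs · j) (hy · j)) (hp j).le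

lemma card_mul_progress_of_mem
    (hy : ∀ i, y i j t = if j ∈ A t ∧ i.val < (A t).card then ((A t).card : ℝ)⁻¹ else 0)
    (hj : j ∈ A t) :
    (A t).card * progress s y j t = ∑ i : Fin m with i.val < (A t).card, s i j := by
  have hk : ((A t).card : ℝ) ≠ 0 := by exact_mod_cast (card_pos.2 ⟨j, hj⟩).ne'
  simp only [progress, hy, hj, true_and, mul_sum, sum_filter]
  refine sum_congr rfl fun i _ => ?_
  split_ifs
  · field_simp
  · simp

lemma speed_div_le_of_progress_div_le
    (hy : ∀ i, y i j t = if j ∈ A t ∧ i.val < (A t).card then ((A t).card : ℝ)⁻¹ else 0)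
    (hso : Antitone (s · j)) (hs : ∀ i, 0 ≤ s i j) {p z : ℝ} (hp : 0 < p) (hj : j ∈ A t)
    (hq : progress s y j t / p ≤ z) (i : Fin m) :
    s i j / p ≤ (if i.val + 1 ≤ (A t).card then ((A t).card : ℝ) / (i.val + 1) else 0) * z + z := by
  have hsq := le_add_one_mul_of_min_mul_le (card_pos.2 ⟨j, hj⟩) (hs i)
    ((Fin.min_mul_le_sum_val_lt_of_antitone hso hs i _).trans_eq
      (card_mul_progress_of_mem hy hj).symm)
  have hcoef : 0 ≤ (if i.val + 1 ≤ (A t).card then ((A t).card : ℝ) / (i.val + 1) else 0) + 1 := by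
    split_ifs <;> positivity
  calc s i j / p ≤ (_ + 1) * progress s y j t / p := by gcongr
    _ = (_ + 1) * (progress s y j t / p) := mul_div_assoc _ _ _
    _ ≤ _ := by rw [add_one_mul]; gcongr

lemma indicator_mul_speed_div_le
    (hy : ∀ i, y i j t = if j ∈ A t ∧ i.val < (A t).card then ((A t).card : ℝ)⁻¹ else 0)
    (hso : Antitone (s · j)) (hs : ∀ i, 0 ≤ s i j) {p z : ℝ} (hp : 0 < p) (hj : j ∈ A t)
    (hz : 0 ≤ z) (i : Fin m) :
    (if progress s y j t / p ≤ z then (1 : ℝ) else 0) * (s i j / p) ≤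
      (if i.val + 1 ≤ (A t).card then ((A t).card : ℝ) / (i.val + 1) else 0) * z + z := by
  by_cases hq : progress s y j t / p ≤ z
  · rw [if_pos hq, one_mul]
    exact speed_div_le_of_progress_div_le hy hso hs hp hj hq i
  · have : 0 ≤ if i.val + 1 ≤ (A t).card then ((A t).card : ℝ) / (i.val + 1) else 0 := by
      split_ifs <;> positivity
    rw [if_neg hq, zero_mul]
    positivity

end RoundRobin

theorem roundRobin_speed_ordered_unrelated_dual_feasible_general
    (m n : ℕ)
    (p : Fin n → ℝ) (r : Fin n → ℕ) (s : Fin m → Fin n → ℝ)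
    (hp : ∀ j, 0 < p j) (hs : ∀ i j, 0 < s i j)
    -- speed-ordered unrelated machines: `s 1 j ≥ s 2 j ≥ … ≥ s m j` for every job `j`
    (hso : ∀ (j : Fin n) (i i' : Fin m), i ≤ i' → s i' j ≤ s i j)
    (κ : ℝ) (hκ : 1 ≤ κ)
    -- the algorithm's schedule: at every time `t`, every alive job receives rate
    -- `1/|J(t)|` on each of the `|J(t)|` fastest machines
    (C : Fin n → ℕ)
    (A : ℕ → Finset (Fin n)) (hA : ∀ t, A t = univ.filter (fun j => r j ≤ t ∧ t ≤ C j))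
    (y : Fin m → Fin n → ℕ → ℝ)
    (hy : ∀ i j t, y i j t =
      if j ∈ A t ∧ (i : ℕ) < (A t).card then ((A t).card : ℝ)⁻¹ else 0)
    -- unfinished jobs `U_t` and the median value `ζ_t`
    (U : ℕ → Finset (Fin n))
    (ζ : ℕ → ℝ)
    (hζ : ∀ t, ζ t = (Multiset.sort
        ((U t).val.map (fun j => progress s y j t / p j)) (· ≤ ·)).getD ((U t).card / 2) 0)
    -- the values β, γ (machine indices are 1-based in `β`)
    (β : Fin m → ℕ → ℝ)
    (hβ : ∀ i t, β i t =
      if (i : ℕ) + 1 ≤ (A t).card then ((A t).card : ℝ) / ((i : ℕ) + 1) else 0)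
    (γ : Fin n → ℕ → ℝ)
    (hγ : ∀ j t, γ j t = if j ∈ A t then 1 else 0)
    -- the dual assignment ā, b̄, c̄
    (abar : Fin n → ℝ)
    (habar : ∀ j, abar j = ∑ t' ∈ Finset.range (C j + 1),
      if progress s y j t' / p j ≤ ζ t' then (1 : ℝ) else 0)
    (bbar : Fin m → ℕ → ℝ)
    (hbbar : ∀ i t, bbar i t = (1 / κ) * ∑' t' : ℕ, if t ≤ t' then β i t' * ζ t' else 0)
    (cbar : Fin n → ℕ → ℝ)
    (hcbar : ∀ j t, cbar j t = (1 / κ) * ∑' t' : ℕ, if t ≤ t' then γ j t' * ζ t' else 0) :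
    ((∀ j, 0 ≤ abar j) ∧ (∀ i t, 0 ≤ bbar i t) ∧ (∀ j t, 0 ≤ cbar j t)) ∧
      (∀ i j (t : ℕ), r j ≤ t →
        abar j * s i j / p j - κ * bbar i t - κ * cbar j t ≤
          (s i j * (t : ℝ)) / p j) := by
  have hκ0 : 0 < κ := by linarith
  have hζ0 : ∀ t, 0 ≤ ζ t := fun t => hζ t ▸ getD_sort_progress_div_nonneg
    (fun i j => (hs i j).le) (fun i j => by rw [hy]; split_ifs <;> positivity) hp _ _
  have hβζ0 : ∀ i t, 0 ≤ β i t * ζ t := fun i t =>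
    mul_nonneg (by rw [hβ]; split_ifs <;> positivity) (hζ0 t)
  have hγζ0 : ∀ j t, 0 ≤ γ j t * ζ t := fun j t =>
    mul_nonneg (by rw [hγ]; split_ifs <;> norm_num) (hζ0 t)
  have hidle : ∀ t, univ.sup C < t → A t = ∅ := fun t ht => by
    rw [hA, filter_eq_empty_iff]
    exact fun j _ ⟨_, hj⟩ => (hj.trans (le_sup (f := C) (mem_univ j))).not_gt ht
  have hκ_cancel : ∀ x, κ * (1 / κ * x) = x := fun x => by field_simp
  refine ⟨⟨fun j => ?_, fun i t => ?_, fun j t => ?_⟩, fun i j t hrt => ?_⟩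
  · rw [habar]
    exact sum_nonneg fun _ _ => by split_ifs <;> norm_num
  · rw [hbbar]
    exact mul_nonneg (by positivity) (tailSum_nonneg (hβζ0 i) t)
  · rw [hcbar]
    exact mul_nonneg (by positivity) (tailSum_nonneg (hγζ0 j) t)
  have hdual : ∀ t' ∈ Icc t (C j), (if progress s y j t' / p j ≤ ζ t' then (1 : ℝ) else 0) *
      (s i j / p j) ≤ β i t' * ζ t' + γ j t' * ζ t' := fun t' ht' => by
    have hjA : j ∈ A t' := by rw [hA]; simp only [mem_Icc] at ht'; simp; omega
    rw [hβ, hγ, if_pos hjA, one_mul]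
    exact indicator_mul_speed_div_le (hy · j t') (hso j) (fun i => (hs i j).le) (hp j) hjA
      (hζ0 t') i
  have hsum := sum_range_succ_le_mul_add_sum_Icc (div_nonneg (hs i j).le (hp j).le)
    (fun t' _ => by split_ifs <;> simp [div_nonneg (hs i j).le (hp j).le]) hdual
  rw [sum_add_distrib, ← sum_mul, ← habar] at hsum
  have hβtail := sum_Icc_le_tailSum (N := univ.sup C) (hβζ0 i)
    (fun t' ht' => by simp [hβ, hidle t' ht']) t (C j)
  have hγtail := sum_Icc_le_tailSum (N := univ.sup C) (hγζ0 j)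
    (fun t' ht' => by simp [hγ, hidle t' ht']) t (C j)
  rw [tailSum] at hβtail hγtail
  rw [hbbar, hcbar, hκ_cancel, hκ_cancel, mul_div_assoc, mul_comm (s i j), mul_div_assoc]
  linarith

/-- For Round Robin on speed-ordered unrelated machines (unit weights) and any `κ ≥ 1`,
the dual assignment `ā, b̄, c̄` is nonnegative and feasible for the dual LP with `α = κ`. -/
theorem roundRobin_speed_ordered_unrelated_dual_feasible
    (m n : ℕ)
    (p : Fin n → ℝ) (r : Fin n → ℕ) (s : Fin m → Fin n → ℝ)
    (hp : ∀ j, 0 < p j) (hs : ∀ i j, 0 < s i j)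
    -- speed-ordered unrelated machines: `s 1 j ≥ s 2 j ≥ … ≥ s m j` for every job `j`
    (hso : ∀ (j : Fin n) (i i' : Fin m), i ≤ i' → s i' j ≤ s i j)
    (κ : ℝ) (hκ : 1 ≤ κ)
    -- the algorithm's schedule: at every time `t`, every alive job receives rate
    -- `1/|J(t)|` on each of the `|J(t)|` fastest machines
    (C : Fin n → ℕ)
    (A : ℕ → Finset (Fin n)) (hA : ∀ t, A t = univ.filter (fun j => r j ≤ t ∧ t ≤ C j))
    (y : Fin m → Fin n → ℕ → ℝ)
    (hy : ∀ i j t, y i j t =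
      if j ∈ A t ∧ (i : ℕ) < (A t).card then ((A t).card : ℝ)⁻¹ else 0)
    (hC : CompletesAt p r s y C)
    -- unfinished jobs `U_t` and the median value `ζ_t`
    (U : ℕ → Finset (Fin n)) (hU : ∀ t, U t = univ.filter (fun j => t ≤ C j))
    (ζ : ℕ → ℝ)
    (hζ : ∀ t, ζ t = (Multiset.sort
        ((U t).val.map (fun j => progress s y j t / p j)) (· ≤ ·)).getD ((U t).card / 2) 0)
    -- the values β, γ (machine indices are 1-based in `β`)
    (β : Fin m → ℕ → ℝ)
    (hβ : ∀ i t, β i t =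
      if (i : ℕ) + 1 ≤ (A t).card then ((A t).card : ℝ) / ((i : ℕ) + 1) else 0)
    (γ : Fin n → ℕ → ℝ)
    (hγ : ∀ j t, γ j t = if j ∈ A t then 1 else 0)
    -- the dual assignment ā, b̄, c̄
    (abar : Fin n → ℝ)
    (habar : ∀ j, abar j = ∑ t' ∈ Finset.range (C j + 1),
      if progress s y j t' / p j ≤ ζ t' then (1 : ℝ) else 0)
    (bbar : Fin m → ℕ → ℝ)
    (hbbar : ∀ i t, bbar i t = (1 / κ) * ∑' t' : ℕ, if t ≤ t' then β i t' * ζ t' else 0)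
    (cbar : Fin n → ℕ → ℝ)
    (hcbar : ∀ j t, cbar j t = (1 / κ) * ∑' t' : ℕ, if t ≤ t' then γ j t' * ζ t' else 0) :
    ((∀ j, 0 ≤ abar j) ∧ (∀ i t, 0 ≤ bbar i t) ∧ (∀ j t, 0 ≤ cbar j t)) ∧
      (∀ i j (t : ℕ), r j ≤ t →
        abar j * s i j / p j - κ * bbar i t - κ * cbar j t ≤
          (s i j * (t : ℝ)) / p j) :=
  roundRobin_speed_ordered_unrelated_dual_feasible_general m n p r s hp hs hso κ hκ C A hA y hy U ζ
    hζ β hβ γ hγ abar habar bbar hbbar cbar hcbar
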